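/- arXiv:1811.05628 — 2 statements merged into one kernel-verified Lean document; each statement's English description precedes it below -/
import Mathlib

section
/- Let V be a 2-dimensional real vector space with basis {a,b}, B a symmetric bilinear form with B(a,a)=B(b,b)=1, B(a,b)=-cosh θ for θ > 0, and let r_a, r_b be the reflections r_x(v) = v − 2B(v,x)x. Then for all i ∈ ℕ, (r_a r_b)^i a = c_{2i+1} a + c_{2i} b, where cⱼ = sinh(jθ)/sinh θ. -/
open Real

theorem stmt5 {V : Type*} [AddCommGroup V] [Module ℝ V]
    (a b : V) (hli : LinearIndependent ℝ ![a, b])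
    (hspan : Submodule.span ℝ ({a, b} : Set V) = ⊤)
    (B : LinearMap.BilinForm ℝ V) (hsymm : ∀ x y : V, B x y = B y x)
    (θ : ℝ) (hθ : 0 < θ)
    (haa : B a a = 1) (hbb : B b b = 1) (hab : B a b = -Real.cosh θ)
    (ra rb : V → V)
    (hra : ra = fun v => v - (2 * B v a) • a)
    (hrb : rb = fun v => v - (2 * B v b) • b)
    (c : ℕ → ℝ) (hc : ∀ j : ℕ, c j = Real.sinh (j * θ) / Real.sinh θ) :
    ∀ i : ℕ, (fun v => ra (rb v))^[i] a = c (2 * i + 1) • a + c (2 * i) • b := by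
  have hs : Real.sinh θ ≠ 0 := ne_of_gt (by positivity)
  have hba : B b a = -Real.cosh θ := (hsymm b a).trans hab
  have crec : ∀ j : ℕ, c (j + 2) = 2 * Real.cosh θ * c (j + 1) - c j := by
    intro j
    rw [hc, hc, hc]
    have key : Real.sinh ((↑(j + 2) : ℝ) * θ) =
        2 * Real.cosh θ * Real.sinh ((↑(j + 1) : ℝ) * θ) - Real.sinh ((j : ℝ) * θ) := by
      push_cast
      have e1 : ((j : ℝ) + 2) * θ = ((j : ℝ) + 1) * θ + θ := by ring
      have e2 : (j : ℝ) * θ = ((j : ℝ) + 1) * θ - θ := by ring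
      rw [e1, e2, Real.sinh_add, Real.sinh_sub]
      ring
    rw [key]
    field_simp
  intro i
  induction i with
  | zero =>
    simp only [Function.iterate_zero, id_eq, Nat.mul_zero, Nat.zero_add]
    rw [hc, hc]
    push_cast
    rw [one_mul, zero_mul, Real.sinh_zero, div_self hs]
    simp
  | succ i ih =>
    rw [Function.iterate_succ_apply', ih, hrb, hra]
    simp only [map_add, map_smul, LinearMap.add_apply, LinearMap.smul_apply,
      map_sub, LinearMap.sub_apply, smul_eq_mul, haa, hbb, hab, hba]
    have h1 : c (2 * (i + 1)) = 2 * Real.cosh θ * c (2 * i + 1) - c (2 * i) := by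
      rw [show 2 * (i + 1) = 2 * i + 1 + 1 from by ring]
      have := crec (2 * i)
      linarith [crec (2 * i)]
    have h2 : c (2 * (i + 1) + 1) = 2 * Real.cosh θ * c (2 * (i + 1)) - c (2 * i + 1) := by
      rw [show 2 * (i + 1) + 1 = 2 * i + 1 + 2 from by ring,
        show 2 * (i + 1) = 2 * i + 1 + 1 from by ring]
      exact crec (2 * i + 1)
    rw [h2, h1]
    match_scalars <;> ring
end

section
/- Let a, b span a 2-dimensional subspace with B(a,a)=B(b,b)=1, B(a,b)=−cosh θ, θ>0, and let c be a vector with r_a r_b c ∉ ℝc and c ∉ ℝa ⊕ ℝb, where r_x(v) = v − 2B(v,x)x. Write μ₁ = 4B(b,c)B(a,b) − 2B(a,c) and μ₂ = −2B(b,c). Then for all i ∈ ℕ, (r_a r_b)^i c = c + μ₁(a + (r_a r_b)a + ⋯ + (r_a r_b)^{i−1}a) + μ₂(b + (r_a r_b)b + ⋯ + (r_a r_b)^{i−1}b). -/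
open Real Finset

theorem stmt16 {V : Type*} [AddCommGroup V] [Module ℝ V]
    (B : LinearMap.BilinForm ℝ V) (hsymm : ∀ x y : V, B x y = B y x)
    (a b c : V) (θ : ℝ) (hθ : 0 < θ)
    (haa : B a a = 1) (hbb : B b b = 1) (hab : B a b = -Real.cosh θ)
    (ra rb : V → V)
    (hra : ra = fun v => v - (2 * B v a) • a)
    (hrb : rb = fun v => v - (2 * B v b) • b)
    (hc1 : ∀ t : ℝ, ra (rb c) ≠ t • c)
    (hc2 : c ∉ Submodule.span ℝ ({a, b} : Set V)) :
    ∀ i : ℕ,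
      (fun v => ra (rb v))^[i] c =
        c + (4 * B b c * B a b - 2 * B a c) •
              (∑ j ∈ Finset.range i, (fun v => ra (rb v))^[j] a) +
            (-2 * B b c) • (∑ j ∈ Finset.range i, (fun v => ra (rb v))^[j] b) := by
  set f : V → V := fun v => ra (rb v) with hf
  have hfc : f c = c + (4 * B b c * B a b - 2 * B a c) • a + (-2 * B b c) • b := by
    simp only [hf, hra, hrb, map_sub, map_smul, LinearMap.sub_apply, LinearMap.smul_apply,
      smul_eq_mul]
    rw [hsymm c b, hsymm c a, hsymm b a]
    module
  have hadd : ∀ x y : V, f (x + y) = f x + f y := by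
    intro x y
    simp only [hf, hra, hrb, map_add, LinearMap.add_apply, map_sub, map_smul,
      LinearMap.sub_apply, LinearMap.smul_apply, smul_eq_mul]
    module
  have hsmul : ∀ (r : ℝ) (x : V), f (r • x) = r • f x := by
    intro r x
    simp only [hf, hra, hrb, map_smul, LinearMap.smul_apply, map_sub, LinearMap.sub_apply,
      smul_eq_mul]
    module
  have hF : ∀ (n : ℕ) (x : V), f (∑ j ∈ Finset.range n, f^[j] x)
      = ∑ j ∈ Finset.range n, f^[j + 1] x := by
    intro n x
    have := map_sum (IsLinearMap.mk' f ⟨hadd, hsmul⟩) (fun j => f^[j] x) (Finset.range n)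
    simp only [IsLinearMap.mk'_apply] at this
    rw [this]
    exact Finset.sum_congr rfl fun j _ => (Function.iterate_succ_apply' f j x).symm
  intro i
  induction i with
  | zero => simp
  | succ n ih =>
    rw [Function.iterate_succ_apply', ih, hadd, hadd, hsmul, hsmul, hfc, hF, hF,
      Finset.sum_range_succ' (fun j => f^[j] a), Finset.sum_range_succ' (fun j => f^[j] b)]
    simp only [Function.iterate_zero_apply, smul_add]
    abel
end
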